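/- Let n ≥ 1, let t_1, …, t_n be positive real numbers with t_1 + ⋯ + t_n = x, and set d_j = tanh t_j. With M = (I + d_n A)(B_0 + q_{n−1} B_1) ⋯ (I + d_1 A)(B_0 + q_0 B_1) = [[a, b],[c, d]] as a 2×2 matrix over ℝ[q_0, …, q_{n−1}], where A = [[0,1],[1,0]], B_0 = [[0,0],[0,1]], B_1 = [[1,0],[0,0]], the following hold: (i) a, b, c, d have nonnegative coefficients; (ii) a(1,…,1) = d(1,…,1) < cosh x and b(1,…,1) = c(1,…,1) < sinh x; (iii) the coefficient of q_0 q_1 ⋯ q_{n−1} in a equals 1; (iv) the constant coefficient of d equals 1. -/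

import Mathlib

open Matrix MvPolynomial

noncomputable section

/-- The matrix `A = [[0,1],[1,0]]` over `ℝ[q_0,…,q_{n-1}]`. -/
def Amat (n : ℕ) : Matrix (Fin 2) (Fin 2) (MvPolynomial (Fin n) ℝ) := !![0, 1; 1, 0]

/-- The matrix `B₀ = [[0,0],[0,1]]` over `ℝ[q_0,…,q_{n-1}]`. -/
def B0mat (n : ℕ) : Matrix (Fin 2) (Fin 2) (MvPolynomial (Fin n) ℝ) := !![0, 0; 0, 1]

/-- The matrix `B₁ = [[1,0],[0,0]]` over `ℝ[q_0,…,q_{n-1}]`. -/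
def B1mat (n : ℕ) : Matrix (Fin 2) (Fin 2) (MvPolynomial (Fin n) ℝ) := !![1, 0; 0, 0]

/-- The transfer matrix `M = (I + dₙA)(B₀ + q_{n-1}B₁) ⋯ (I + d₁A)(B₀ + q₀B₁)`
(indices written `0,…,n-1` in Lean). -/
def transferM (n : ℕ) (d : Fin n → ℝ) : Matrix (Fin 2) (Fin 2) (MvPolynomial (Fin n) ℝ) :=
  (List.ofFn fun j : Fin n =>
      ((1 : Matrix (Fin 2) (Fin 2) (MvPolynomial (Fin n) ℝ)) +
          (C (d j) : MvPolynomial (Fin n) ℝ) • Amat n) *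
        (B0mat n + (X j : MvPolynomial (Fin n) ℝ) • B1mat n)).reverse.prod

/-! Each factor `(I + dⱼA)(B₀ + qⱼB₁)` equals `[[qⱼ, dⱼ], [dⱼqⱼ, 1]]`. Its entries have
nonnegative coefficients when `dⱼ ≥ 0`, and `qⱼ` occurs only in its first column. So multiplying
by one more factor `[[q, d], [dq, 1]]` on the left, in a new variable `q`, turns the `(0,0)` entry
`a` into `q a + d c` with `q` absent from `c`, which keeps the coefficient of the product of all
variables equal to `1`, and leaves the constant term of the `(1,1)` entry unchanged.
At `q = 1` the factor is `[[1, tanh t], [tanh t, 1]] = (cosh t)⁻¹ R(t)` for the hyperbolic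
rotation `R`, and `R(s) R(t) = R(s + t)`, so `M(1, …, 1) = (∏ cosh tⱼ)⁻¹ R(x)` with
`∏ cosh tⱼ > 1`. -/

namespace MvPolynomial

variable (σ R : Type*) [CommSemiring R] [PartialOrder R] [IsOrderedRing R]

def nonnegCoeffs : Subsemiring (MvPolynomial σ R) where
  carrier := {p | ∀ m, 0 ≤ coeff m p}
  mul_mem' {p q} hp hq m := by
    classical
    show 0 ≤ coeff m (p * q)
    rw [coeff_mul]
    exact Finset.sum_nonneg fun x _ => mul_nonneg (hp x.1) (hq x.2)
  one_mem' m := by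
    classical
    rw [coeff_one]
    split_ifs <;> simp
  add_mem' hp hq m := by
    rw [coeff_add]
    exact add_nonneg (hp m) (hq m)
  zero_mem' m := by simp

variable {σ R}

theorem C_mem_nonnegCoeffs {r : R} (hr : 0 ≤ r) : C r ∈ nonnegCoeffs σ R := fun m => by
  classical
  rw [coeff_C]
  split_ifs <;> simp [hr]

theorem X_mem_nonnegCoeffs (i : σ) : X i ∈ nonnegCoeffs σ R := fun m => by
  classical
  rw [coeff_X]
  split_ifs <;> simp

end MvPolynomial

def hyperbolicRotation (t : ℝ) : Matrix (Fin 2) (Fin 2) ℝ :=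
  !![Real.cosh t, Real.sinh t; Real.sinh t, Real.cosh t]

theorem hyperbolicRotation_add (s t : ℝ) :
    hyperbolicRotation (s + t) = hyperbolicRotation s * hyperbolicRotation t := by
  simp only [hyperbolicRotation, Matrix.mul_fin_two, Real.cosh_add, Real.sinh_add]
  congr 1
  ring_nf

theorem tanh_matrix_eq_smul_hyperbolicRotation (t : ℝ) :
    !![1, Real.tanh t; Real.tanh t, 1] = (Real.cosh t)⁻¹ • hyperbolicRotation t := by
  have := (Real.cosh_pos t).ne'
  ext i k
  fin_cases i <;> fin_cases k <;>
    simp [hyperbolicRotation, Real.tanh_eq_sinh_div_cosh, this, div_eq_inv_mul]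

theorem prod_inv_cosh_lt_one {ι : Type*} {s : Finset ι} (hs : s.Nonempty) {t : ι → ℝ}
    (ht : ∀ i ∈ s, t i ≠ 0) : ∏ i ∈ s, (Real.cosh (t i))⁻¹ < 1 := by
  simpa using Finset.prod_lt_prod_of_nonempty (g := fun _ => 1)
    (fun i _ => inv_pos.mpr (Real.cosh_pos (t i)))
    (fun i hi => inv_lt_one_of_one_lt₀ (Real.one_lt_cosh.mpr (ht i hi))) hs

def transferFactor {n : ℕ} (d : Fin n → ℝ) (j : Fin n) :
    Matrix (Fin 2) (Fin 2) (MvPolynomial (Fin n) ℝ) :=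
  !![X j, C (d j); C (d j) * X j, 1]

section transferFactor

variable {n : ℕ} (d : Fin n → ℝ)

theorem one_add_smul_Amat_mul_eq_transferFactor (j : Fin n) :
    ((1 : Matrix (Fin 2) (Fin 2) (MvPolynomial (Fin n) ℝ)) +
        (C (d j) : MvPolynomial (Fin n) ℝ) • Amat n) *
      (B0mat n + (X j : MvPolynomial (Fin n) ℝ) • B1mat n) = transferFactor d j := by
  ext i k
  fin_cases i <;> fin_cases k <;>
    simp [Amat, B0mat, B1mat, transferFactor, Matrix.mul_apply, Fin.sum_univ_two, mul_comm]

theorem transferM_eq_prod_transferFactor :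
    transferM n d = (List.ofFn (transferFactor d)).reverse.prod := by
  simp only [transferM, one_add_smul_Amat_mul_eq_transferFactor]

theorem transferFactor_map_rename_castSucc (d : Fin (n + 1) → ℝ) (j : Fin n) :
    (transferFactor (d ∘ Fin.castSucc) j).map (rename Fin.castSucc) =
      transferFactor d j.castSucc := by
  ext i k
  fin_cases i <;> fin_cases k <;> simp [transferFactor]

theorem transferM_succ (d : Fin (n + 1) → ℝ) :
    transferM (n + 1) d =
      transferFactor d (Fin.last n) *
        (transferM n (d ∘ Fin.castSucc)).map (rename Fin.castSucc) := by
  rw [transferM_eq_prod_transferFactor, transferM_eq_prod_transferFactor, List.ofFn_succ',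
    List.concat_eq_append, List.reverse_append, List.prod_append, List.reverse_singleton,
    List.prod_singleton]
  congr 1
  rw [← AlgHom.mapMatrix_apply, map_list_prod, List.map_reverse, List.map_ofFn]
  congr 3
  funext j
  exact (transferFactor_map_rename_castSucc d j).symm

theorem transferM_mem_matrix_nonnegCoeffs (hd : ∀ j, 0 ≤ d j) :
    transferM n d ∈ (nonnegCoeffs (Fin n) ℝ).matrix := by
  rw [transferM_eq_prod_transferFactor]
  refine Subsemiring.list_prod_mem _ fun F hF => ?_
  obtain ⟨j, rfl⟩ := List.mem_ofFn.mp (List.mem_reverse.mp hF)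
  have hX := X_mem_nonnegCoeffs (R := ℝ) j
  have hC := C_mem_nonnegCoeffs (σ := Fin n) (hd j)
  intro i k
  fin_cases i <;> fin_cases k
  exacts [hX, hC, Subsemiring.mul_mem _ hC hX, Subsemiring.one_mem _]

theorem coeff_zero_transferM_one_one : coeff 0 (transferM n d 1 1) = 1 := by
  rw [← constantCoeff_eq]
  induction n with
  | zero => simp [transferM]
  | succ n ih =>
    simp [transferM_succ, Matrix.mul_apply, Fin.sum_univ_two, transferFactor, ih]

theorem equivFunOnFinite_symm_one_succ :
    Finsupp.equivFunOnFinite.symm (fun _ : Fin (n + 1) => 1) =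
      Finsupp.single (Fin.last n) 1 +
        (Finsupp.equivFunOnFinite.symm fun _ : Fin n => 1).mapDomain Fin.castSucc := by
  ext j
  cases j using Fin.lastCases with
  | last => simp [Finsupp.mapDomain_of_notMem_range]
  | cast j => simp [Finsupp.mapDomain_apply (Fin.castSucc_injective n)]

theorem coeff_transferM_zero_zero :
    coeff (Finsupp.equivFunOnFinite.symm fun _ => 1) (transferM n d 0 0) = 1 := by
  induction n with
  | zero => simp [transferM, Subsingleton.elim _ (0 : Fin 0 →₀ ℕ)]
  | succ n ih =>
    have hlast : coeff (Finsupp.equivFunOnFinite.symm fun _ => 1)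
        (rename Fin.castSucc (transferM n (d ∘ Fin.castSucc) 1 0)) = 0 := by
      refine coeff_rename_eq_zero _ _ _ fun u hu => absurd (congrArg (· (Fin.last n)) hu) ?_
      simp [Finsupp.mapDomain_of_notMem_range]
    rw [equivFunOnFinite_symm_one_succ] at hlast ⊢
    simp [transferM_succ, Matrix.mul_apply, Fin.sum_univ_two, transferFactor, coeff_X_mul,
      coeff_rename_mapDomain _ (Fin.castSucc_injective n), ih, hlast]

theorem transferFactor_map_eval_one (j : Fin n) :
    (transferFactor d j).map (eval fun _ => 1) = !![1, d j; d j, 1] := by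
  ext i k
  fin_cases i <;> fin_cases k <;> simp [transferFactor]

end transferFactor

theorem transferM_tanh_map_eval_one {n : ℕ} (t : Fin n → ℝ) :
    (transferM n fun j => Real.tanh (t j)).map (eval fun _ => 1) =
      (∏ j, (Real.cosh (t j))⁻¹) • hyperbolicRotation (∑ j, t j) := by
  induction n with
  | zero => simp [transferM, hyperbolicRotation, ← Matrix.one_fin_two]
  | succ n ih =>
    have hrest : ⇑(eval fun _ => 1) ∘ ⇑(rename Fin.castSucc) = eval fun _ : Fin n => (1 : ℝ) :=
      funext fun p => eval_rename _ _ _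
    rw [transferM_succ, Matrix.map_mul, Matrix.map_map, transferFactor_map_eval_one, hrest]
    have := ih (t ∘ Fin.castSucc)
    simp only [Function.comp_def] at this ⊢
    rw [this, tanh_matrix_eq_smul_hyperbolicRotation, Matrix.smul_mul, Matrix.mul_smul, smul_smul,
      ← hyperbolicRotation_add, Fin.prod_univ_castSucc, Fin.sum_univ_castSucc, mul_comm, add_comm]

/-- For `dⱼ = tanh tⱼ` with `tⱼ > 0` and `∑ tⱼ = x`, the entries of the transfer matrix have
nonnegative coefficients, `a(1,…,1) = d(1,…,1) < cosh x`, `b(1,…,1) = c(1,…,1) < sinh x`,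
the coefficient of `q₀⋯q_{n-1}` in `a` is `1` and the constant coefficient of `d` is `1`. -/
theorem transferM_entries_tanh (n : ℕ) (hn : 1 ≤ n) (x : ℝ) (t : Fin n → ℝ)
    (ht : ∀ j, 0 < t j) (hx : ∑ j, t j = x) :
    (∀ (i j : Fin 2) (mono : Fin n →₀ ℕ),
        0 ≤ coeff mono (transferM n (fun j => Real.tanh (t j)) i j)) ∧
    eval (fun _ => (1 : ℝ)) (transferM n (fun j => Real.tanh (t j)) 0 0) =
      eval (fun _ => (1 : ℝ)) (transferM n (fun j => Real.tanh (t j)) 1 1) ∧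
    eval (fun _ => (1 : ℝ)) (transferM n (fun j => Real.tanh (t j)) 0 0) < Real.cosh x ∧
    eval (fun _ => (1 : ℝ)) (transferM n (fun j => Real.tanh (t j)) 0 1) =
      eval (fun _ => (1 : ℝ)) (transferM n (fun j => Real.tanh (t j)) 1 0) ∧
    eval (fun _ => (1 : ℝ)) (transferM n (fun j => Real.tanh (t j)) 0 1) < Real.sinh x ∧
    coeff (Finsupp.equivFunOnFinite.symm fun _ => 1)
      (transferM n (fun j => Real.tanh (t j)) 0 0) = 1 ∧
    coeff 0 (transferM n (fun j => Real.tanh (t j)) 1 1) = 1 := by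
  have hne : (Finset.univ : Finset (Fin n)).Nonempty := ⟨⟨0, hn⟩, Finset.mem_univ _⟩
  have hx_pos : 0 < x := hx ▸ Finset.sum_pos (fun j _ => ht j) hne
  have hc := prod_inv_cosh_lt_one hne fun j _ => (ht j).ne'
  have htanh j : 0 ≤ Real.tanh (t j) := by
    rw [Real.tanh_eq_sinh_div_cosh]
    exact div_nonneg (Real.sinh_pos_iff.mpr (ht j)).le (Real.cosh_pos _).le
  have heval i k : eval (fun _ => (1 : ℝ)) (transferM n (fun j => Real.tanh (t j)) i k) =
      ((∏ j, (Real.cosh (t j))⁻¹) • hyperbolicRotation x) i k := by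
    rw [← hx, ← transferM_tanh_map_eval_one]
    rfl
  simp only [heval, Matrix.smul_apply, hyperbolicRotation, smul_eq_mul, Matrix.of_apply,
    Matrix.cons_val', Matrix.cons_val_zero, Matrix.cons_val_one, Matrix.empty_val',
    Matrix.cons_val_fin_one]
  exact ⟨transferM_mem_matrix_nonnegCoeffs _ htanh, trivial,
    mul_lt_of_lt_one_left (Real.cosh_pos x) hc, trivial,
    mul_lt_of_lt_one_left (Real.sinh_pos_iff.mpr hx_pos) hc,
    coeff_transferM_zero_zero _, coeff_zero_transferM_one_one _⟩

end
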